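/- For every integer n ≥ 1 and all x, y ∈ [−1/2, 1/2], the n-th Legendre polynomial satisfies |P_n(x) − P_n(y)| ≤ |P_n(x)| + |P_n(y)| ≤ 4/√n. -/

import Mathlib

/-!
By Legendre's equation `(1 - x²) P'' - 2x P' + n(n+1) P = 0`, the polynomial
`E = n(n+1)(1 - x²) P² + (1 - x²)² P'²` has derivative `E' = -2n(n+1) x P²`, so `E` is maximal
at `x = 0`, where `E(0) = n(n+1) P(0)² + P'(0)²`. By parity one of the two terms vanishes, and with
`m = ⌊n/2⌋` the other one equals `n (2m+1) C(2m,m)² / 16^m ≤ n` by the Wallis-type bound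
`(2m+1) C(2m,m)² ≤ 16^m`. Hence `(n+1)(1 - x²) P_n(x)² ≤ 1`, which gives `|P_n(x)| ≤ 2/√n` for
`|x| ≤ 1/2`.
-/

open Polynomial

/-- The `n`-th Legendre polynomial, via Rodrigues' formula
`P_n(x) = (1/(2ⁿ·n!)) · dⁿ/dxⁿ[(x² − 1)ⁿ]`. -/
noncomputable def legendre (n : ℕ) (x : ℝ) : ℝ :=
  (1 / ((2 : ℝ) ^ n * n.factorial)) * iteratedDeriv n (fun y : ℝ => (y ^ 2 - 1) ^ n) x

theorem Nat.centralBinom_sq_mul_le (m : ℕ) : m.centralBinom ^ 2 * (2 * m + 1) ≤ 16 ^ m := by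
  induction m with
  | zero => simp
  | succ m ih =>
    have h := Nat.succ_mul_centralBinom_succ m
    refine Nat.le_of_mul_le_mul_left ?_ (by positivity : 0 < (m + 1) ^ 2)
    calc (m + 1) ^ 2 * ((m + 1).centralBinom ^ 2 * (2 * (m + 1) + 1))
        = (2 * (2 * m + 1) * m.centralBinom) ^ 2 * (2 * m + 3) := by rw [← h]; ring
      _ = 4 * (2 * m + 1) * (2 * m + 3) * (m.centralBinom ^ 2 * (2 * m + 1)) := by ring
      _ ≤ 4 * (2 * m + 2) * (2 * m + 2) * 16 ^ m := Nat.mul_le_mul (by nlinarith) ih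
      _ = (m + 1) ^ 2 * 16 ^ (m + 1) := by ring

theorem apply_le_apply_zero_of_mul_deriv_nonpos {f : ℝ → ℝ} (hf : Differentiable ℝ f)
    (h : ∀ t, t * deriv f t ≤ 0) (x : ℝ) : f x ≤ f 0 := by
  rcases le_total x 0 with hx | hx
  · refine monotoneOn_of_deriv_nonneg (convex_Iic 0) hf.continuous.continuousOn
      hf.differentiableOn ?_ hx (Set.mem_Iic.2 le_rfl) hx
    intro t ht
    rw [interior_Iic] at ht
    exact nonneg_of_mul_nonpos_right (h t) ht
  · refine antitoneOn_of_deriv_nonpos (convex_Ici 0) hf.continuous.continuousOn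
      hf.differentiableOn ?_ (Set.mem_Ici.2 le_rfl) hx hx
    intro t ht
    rw [interior_Ici] at ht
    exact nonpos_of_mul_nonpos_right (h t) ht

theorem Polynomial.iteratedDeriv_eval {𝕜 : Type*} [NontriviallyNormedField 𝕜] (p : 𝕜[X])
    (k : ℕ) : iteratedDeriv k (fun x => p.eval x) = fun x => (derivative^[k] p).eval x := by
  induction k generalizing p with
  | zero => rfl
  | succ k ih =>
    have : _root_.deriv (fun x => p.eval x) = fun x => p.derivative.eval x := by
      ext x
      exact Polynomial.deriv p
    rw [iteratedDeriv_succ', this, ih, Function.iterate_succ_apply]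

namespace Polynomial

variable {R : Type*} [CommRing R]

theorem sq_sub_one_mul_derivative_sq_sub_one_pow (n : ℕ) :
    (X ^ 2 - 1) * derivative ((X ^ 2 - 1 : R[X]) ^ n) = 2 * (n : R[X]) * X * (X ^ 2 - 1) ^ n := by
  rw [derivative_pow, derivative_sub, derivative_X_sq, derivative_one, C_eq_natCast, C_ofNat]
  rcases n with _ | n
  · simp
  · push_cast
    ring

-- Legendre's equation, from differentiating the previous identity `n + 1` times.
theorem sq_sub_one_mul_iterate_derivative_sq_sub_one_pow (n : ℕ) :
    (X ^ 2 - 1) * derivative^[n + 2] ((X ^ 2 - 1 : R[X]) ^ n)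
      + 2 * X * derivative^[n + 1] ((X ^ 2 - 1 : R[X]) ^ n)
      = (n * (n + 1) : R[X]) * derivative^[n] ((X ^ 2 - 1 : R[X]) ^ n) := by
  set u : R[X] := (X ^ 2 - 1) ^ n
  have h : derivative^[2] u * X ^ 2 - derivative^[2] u + 2 • (derivative u * X)
      = (2 * n) • u + (2 * n) • (derivative u * X) := by
    have := congrArg derivative (sq_sub_one_mul_derivative_sq_sub_one_pow (R := R) n)
    simp only [derivative_mul, derivative_sub, derivative_X_sq, derivative_one,
      derivative_X, derivative_natCast, derivative_ofNat, C_ofNat] at this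
    simp only [Function.iterate_succ, Function.iterate_zero, Function.comp_apply, id]
    linear_combination this
  have := congrArg (derivative^[n]) h
  simp only [iterate_derivative_sub, iterate_map_add, iterate_derivative_smul,
    iterate_derivative_derivative_mul_X_sq, iterate_derivative_derivative_mul_X,
    ← Function.iterate_add_apply] at this
  have hpred : ((n * (n - 1) : ℕ) : R[X]) = n * n - n := by
    rw [Nat.mul_sub_one, Nat.cast_sub (Nat.le_mul_self n), Nat.cast_mul]
  simp only [nsmul_eq_mul, hpred] at this
  push_cast at this
  linear_combination this

theorem coeff_sq_sub_one_pow (n k : ℕ) :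
    ((X ^ 2 - 1 : R[X]) ^ n).coeff k =
      if 2 ∣ k then (-1 : R) ^ (n - k / 2) * n.choose (k / 2) else 0 := by
  have : (X ^ 2 - 1 : R[X]) ^ n = expand R 2 ((X + C (-1)) ^ n) := by
    simp [sub_eq_add_neg]
  rw [this, coeff_expand two_pos, coeff_X_add_C_pow]

noncomputable def legendreEnergy (a : R) (P : R[X]) : R[X] :=
  C a * (1 - X ^ 2) * P ^ 2 + (1 - X ^ 2) ^ 2 * derivative P ^ 2

theorem derivative_legendreEnergy {a : R} {P : R[X]}
    (hP : (X ^ 2 - 1) * derivative (derivative P) + 2 * X * derivative P = C a * P) :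
    derivative (legendreEnergy a P) = -(2 * C a * X * P ^ 2) := by
  simp only [legendreEnergy, derivative_mul, derivative_add, derivative_sub, derivative_pow,
    derivative_C, derivative_one, derivative_X, Nat.cast_ofNat, C_ofNat]
  linear_combination (-2 * (1 - X ^ 2) * derivative P) * hP

theorem eval_zero_legendreEnergy (a : R) (P : R[X]) :
    (legendreEnergy a P).eval 0 = a * P.coeff 0 ^ 2 + P.coeff 1 ^ 2 := by
  have : (derivative P).eval 0 = P.coeff 1 := by
    rw [← coeff_zero_eq_eval_zero, coeff_derivative]; simp
  simp [legendreEnergy, ← coeff_zero_eq_eval_zero, this]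

end Polynomial

noncomputable def legendrePoly (n : ℕ) : ℝ[X] :=
  C (1 / (2 ^ n * n.factorial : ℝ)) * derivative^[n] ((X ^ 2 - 1 : ℝ[X]) ^ n)

theorem legendre_eq_eval_legendrePoly (n : ℕ) (x : ℝ) :
    legendre n x = (legendrePoly n).eval x := by
  have : (fun y : ℝ => (y ^ 2 - 1) ^ n) = fun y => ((X ^ 2 - 1 : ℝ[X]) ^ n).eval y := by
    simp
  rw [legendre, legendrePoly, this, iteratedDeriv_eval, eval_C_mul]

theorem legendrePoly_ode (n : ℕ) :
    (X ^ 2 - 1) * derivative (derivative (legendrePoly n)) + 2 * X * derivative (legendrePoly n)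
      = C ((n : ℝ) * (n + 1)) * legendrePoly n := by
  have h := sq_sub_one_mul_iterate_derivative_sq_sub_one_pow (R := ℝ) n
  simp only [Function.iterate_succ_apply'] at h
  simp only [legendrePoly, derivative_C_mul, map_mul, map_add, map_natCast, map_one]
  linear_combination C (1 / (2 ^ n * n.factorial : ℝ)) * h

theorem coeff_legendrePoly (n k : ℕ) :
    (legendrePoly n).coeff k = (k + n).descFactorial n / (2 ^ n * n.factorial)
      * ((X ^ 2 - 1 : ℝ[X]) ^ n).coeff (k + n) := by
  rw [legendrePoly, coeff_C_mul, coeff_iterate_derivative, nsmul_eq_mul]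
  ring

theorem coeff_legendrePoly_eq_zero_of_odd {n k : ℕ} (h : Odd (k + n)) :
    (legendrePoly n).coeff k = 0 := by
  rw [coeff_legendrePoly, coeff_sq_sub_one_pow,
    if_neg (Nat.not_even_iff_odd.2 h ∘ even_iff_two_dvd.2), mul_zero]

theorem sq_coeff_zero_legendrePoly_two_mul (m : ℕ) :
    (legendrePoly (2 * m)).coeff 0 ^ 2 = m.centralBinom ^ 2 / 16 ^ m := by
  rw [coeff_legendrePoly, coeff_sq_sub_one_pow, zero_add, Nat.descFactorial_self,
    if_pos (dvd_mul_right 2 m), Nat.mul_div_cancel_left m two_pos, ← Nat.centralBinom]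
  have h16 : (16 : ℝ) ^ m = ((2 : ℝ) ^ (2 * m)) ^ 2 := by
    rw [← pow_mul, show 2 * m * 2 = 4 * m by ring, pow_mul]; norm_num
  rw [h16]
  field_simp
  rw [pow_right_comm, neg_one_sq, one_pow, one_mul]

theorem sq_coeff_one_legendrePoly_two_mul_add_one (m : ℕ) :
    (legendrePoly (2 * m + 1)).coeff 1 ^ 2 = (2 * m + 1) ^ 2 * (m.centralBinom ^ 2 / 16 ^ m) := by
  have hdesc :
      (1 + (2 * m + 1)).descFactorial (2 * m + 1) = (2 * m + 2) * (2 * m + 1).factorial := by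
    have := Nat.succ_descFactorial (2 * m + 1) (2 * m + 1)
    rw [Nat.descFactorial_self] at this
    simpa [add_comm 1] using this
  have hchoose : (2 * m + 2) * (2 * m + 1).choose (m + 1) = 2 * (2 * m + 1) * m.centralBinom := by
    have := Nat.add_one_mul_choose_eq (2 * m) m
    rw [Nat.centralBinom_eq_two_mul_choose]
    linarith
  rw [coeff_legendrePoly, coeff_sq_sub_one_pow, hdesc, show 1 + (2 * m + 1) = 2 * (m + 1) by ring,
    if_pos (dvd_mul_right 2 _), Nat.mul_div_cancel_left _ two_pos]
  have h16 : (16 : ℝ) ^ m = ((2 : ℝ) ^ (2 * m)) ^ 2 := by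
    rw [← pow_mul, show 2 * m * 2 = 4 * m by ring, pow_mul]; norm_num
  have hR : ((2 * m + 2 : ℕ) : ℝ) * ((2 * m + 1).choose (m + 1) : ℕ)
      = 2 * (2 * m + 1) * m.centralBinom := by
    exact_mod_cast hchoose
  rw [h16]
  field_simp
  rw [pow_right_comm _ _ 2, neg_one_sq, one_pow, mul_one]
  push_cast at hR ⊢
  linear_combination ((2 * m + 1).factorial * (2 : ℝ) ^ (2 * m) : ℝ) ^ 2
    * ((2 * m + 2) * (2 * m + 1).choose (m + 1) + 2 * (2 * m + 1) * m.centralBinom) * hR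

theorem eval_zero_legendreEnergy_legendrePoly_le (n : ℕ) :
    (legendreEnergy (n * (n + 1) : ℝ) (legendrePoly n)).eval 0 ≤ n := by
  rw [eval_zero_legendreEnergy]
  obtain ⟨m, rfl | rfl⟩ := n.even_or_odd'
  all_goals
    have hc : (m.centralBinom : ℝ) ^ 2 / 16 ^ m * (2 * m + 1) ≤ 1 := by
      rw [div_mul_eq_mul_div, div_le_one (by positivity)]
      exact_mod_cast m.centralBinom_sq_mul_le
  · rw [sq_coeff_zero_legendrePoly_two_mul, coeff_legendrePoly_eq_zero_of_odd (by simp)]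
    push_cast
    linarith [mul_le_mul_of_nonneg_left hc (by positivity : (0 : ℝ) ≤ 2 * m)]
  · rw [sq_coeff_one_legendrePoly_two_mul_add_one, coeff_legendrePoly_eq_zero_of_odd (by simp)]
    push_cast
    linarith [mul_le_mul_of_nonneg_left hc (by positivity : (0 : ℝ) ≤ 2 * m + 1)]

theorem succ_mul_one_sub_sq_mul_legendre_sq_le {n : ℕ} (hn : 1 ≤ n) (z : ℝ) :
    (n + 1) * (1 - z ^ 2) * legendre n z ^ 2 ≤ 1 := by
  have henergy : (legendreEnergy (n * (n + 1) : ℝ) (legendrePoly n)).eval z ≤ n := by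
    refine (apply_le_apply_zero_of_mul_deriv_nonpos (legendreEnergy _ _).differentiable
      (fun t => ?_) z).trans (eval_zero_legendreEnergy_legendrePoly_le n)
    rw [Polynomial.deriv, derivative_legendreEnergy (legendrePoly_ode n)]
    simp only [eval_neg, eval_mul, eval_ofNat, eval_C, eval_X, eval_pow]
    calc _ = -(2 * (n * (n + 1)) * (t * (legendrePoly n).eval t) ^ 2) := by ring
      _ ≤ 0 := neg_nonpos.2 (by positivity)
  have hlower : n * ((n + 1) * (1 - z ^ 2) * legendre n z ^ 2)
      ≤ (legendreEnergy (n * (n + 1) : ℝ) (legendrePoly n)).eval z := by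
    simp only [legendreEnergy, legendre_eq_eval_legendrePoly, eval_add, eval_mul, eval_C,
      eval_sub, eval_one, eval_pow, eval_X]
    nlinarith [sq_nonneg ((1 - z ^ 2) * (derivative (legendrePoly n)).eval z)]
  have hn' : (0 : ℝ) < n := by exact_mod_cast hn
  exact le_of_mul_le_mul_left (by linarith) hn'

theorem abs_legendre_le {n : ℕ} (hn : 1 ≤ n) {z : ℝ} (hz : z ∈ Set.Icc (-(1 / 2) : ℝ) (1 / 2)) :
    |legendre n z| ≤ 2 / Real.sqrt n := by
  have hn' : (0 : ℝ) < n := by exact_mod_cast hn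
  have hz2 : z ^ 2 ≤ 1 / 4 := by nlinarith [hz.1, hz.2]
  have hsq : legendre n z ^ 2 ≤ 4 / n := by
    rw [le_div_iff₀ hn']
    nlinarith [succ_mul_one_sub_sq_mul_legendre_sq_le hn z, sq_nonneg (legendre n z)]
  calc |legendre n z| ≤ Real.sqrt (4 / n) := Real.abs_le_sqrt hsq
    _ = 2 / Real.sqrt n := by rw [Real.sqrt_div' _ hn'.le]; norm_num

theorem legendre_sup_bound (n : ℕ) (hn : 1 ≤ n) (x y : ℝ)
    (hx : x ∈ Set.Icc (-(1 / 2) : ℝ) (1 / 2)) (hy : y ∈ Set.Icc (-(1 / 2) : ℝ) (1 / 2)) :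
    |legendre n x - legendre n y| ≤ |legendre n x| + |legendre n y| ∧
      |legendre n x| + |legendre n y| ≤ 4 / Real.sqrt n := by
  refine ⟨abs_sub _ _, ?_⟩
  calc |legendre n x| + |legendre n y| ≤ 2 / Real.sqrt n + 2 / Real.sqrt n :=
        add_le_add (abs_legendre_le hn hx) (abs_legendre_le hn hy)
    _ = 4 / Real.sqrt n := by ring
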